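/- arXiv:2202.01587 — 4 statements merged into one kernel-verified Lean document; each statement's English description precedes it below -/
import Mathlib

section
/- Let S be a nonempty finite set, let w : S → ℝ satisfy w(e) > 0 for every e ∈ S, and for α ∈ ℝ define g(α) := (Σ_{e∈S} w(e)^α · log w(e)) / (Σ_{e∈S} w(e)^α). Then for every α ≥ 0, the arithmetic mean of the logarithms is a lower bound: (1/|S|) · Σ_{e∈S} log w(e) ≤ g(α). -/
open Finset

theorem MonovaryOn.one_div_card_mul_sum_le_sum_mul_div_sum {ι α : Type*} [Field α] [LinearOrder α]
    [IsStrictOrderedRing α] {s : Finset ι} {f g : ι → α} (hfg : MonovaryOn f g s)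
    (hf : 0 < ∑ i ∈ s, f i) :
    1 / (#s : α) * ∑ i ∈ s, g i ≤ (∑ i ∈ s, f i * g i) / ∑ i ∈ s, f i := by
  have hcard : (0 : α) < #s := by
    exact_mod_cast (nonempty_of_sum_ne_zero hf.ne').card_pos
  rw [one_div_mul_eq_div, div_le_div_iff₀ hcard hf]
  linarith [hfg.sum_mul_sum_le_card_mul_sum]

theorem Real.monovaryOn_rpow_log {ι : Type*} {s : Set ι} {w : ι → ℝ} (hw : ∀ i ∈ s, 0 < w i)
    {α : ℝ} (hα : 0 ≤ α) : MonovaryOn (fun i ↦ w i ^ α) (fun i ↦ Real.log (w i)) s :=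
  fun i hi j hj hlt ↦
    Real.rpow_le_rpow (hw i hi).le ((Real.log_lt_log_iff (hw i hi) (hw j hj)).1 hlt).le hα

theorem weighted_log_avg_lower_bound {ι : Type*} (S : Finset ι) (hS : S.Nonempty)
    (w : ι → ℝ) (hw : ∀ e ∈ S, 0 < w e) :
    ∀ α : ℝ, 0 ≤ α →
      (1 / (S.card : ℝ)) * ∑ e ∈ S, Real.log (w e) ≤
        (∑ e ∈ S, w e ^ α * Real.log (w e)) / (∑ e ∈ S, w e ^ α) := by
  intro α hα
  have hsum : 0 < ∑ e ∈ S, w e ^ α :=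
    sum_pos (fun e he ↦ Real.rpow_pos_of_pos (hw e he) α) hS
  exact (Real.monovaryOn_rpow_log hw hα).one_div_card_mul_sum_le_sum_mul_div_sum hsum
end

section
/- Let S be a nonempty finite set, let w : S → ℝ satisfy w(e) > 0 for every e ∈ S, and let A ⊆ S be a nonempty subset. Suppose that max_{e∈A} log w(e) < (1/|S|) · Σ_{e∈S} log w(e) (equivalently, log w(e) < (1/|S|) · Σ_{e'∈S} log w(e') for every e ∈ A). Then the function f(α) := (Σ_{e∈A} w(e)^α) / (Σ_{e∈S} w(e)^α) is strictly decreasing on [0, ∞): for all 0 ≤ α₁ < α₂, f(α₂) < f(α₁). -/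
/-! Put `x = log w`, so that `w ^ α = exp (α x)`, and let `p_α` be the probability on `S`
proportional to `exp (α x)`. For `α ≥ 0` these weights increase with `x`, so by Chebyshev's
sum inequality the `p_α`-mean of `x` is at least its uniform mean, which exceeds `x a` for every
`a ∈ A`. Jensen's inequality for `exp` then gives, for `δ > 0`,
`exp (δ x a) < exp (δ 𝔼_{p_α} x) ≤ 𝔼_{p_α} exp (δ x) = Σ_S exp ((α + δ) x) / Σ_S exp (α x)`,
and summing `exp (α x a) exp (δ x a)` over `a ∈ A` yields `f (α + δ) < f α`. -/

open Finset Real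

section

variable {ι : Type*}

theorem exp_sum_mul_div_le_sum_mul_exp_div (s : Finset ι) (q x : ι → ℝ) (hq : ∀ i ∈ s, 0 ≤ q i)
    (hT : 0 < ∑ i ∈ s, q i) :
    exp ((∑ i ∈ s, q i * x i) / ∑ i ∈ s, q i) ≤ (∑ i ∈ s, q i * exp (x i)) / ∑ i ∈ s, q i := by
  simpa [centerMass, smul_eq_mul, div_eq_inv_mul] using
    convexOn_exp.map_centerMass_le hq hT (p := x) (fun _ _ => Set.mem_univ _)

theorem sum_mul_sum_le_card_mul_sum_exp_mul (s : Finset ι) (x : ι → ℝ) {α : ℝ} (hα : 0 ≤ α) :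
    (∑ i ∈ s, exp (α * x i)) * ∑ i ∈ s, x i ≤ #s * ∑ i ∈ s, exp (α * x i) * x i :=
  MonovaryOn.sum_mul_sum_le_card_mul_sum fun _ _ _ _ hij =>
    exp_le_exp.2 (mul_le_mul_of_nonneg_left hij.le hα)

theorem exp_mul_mul_sum_exp_lt_sum_exp {s : Finset ι} (hs : s.Nonempty) (x : ι → ℝ) {a : ι}
    (ha : x a < (∑ i ∈ s, x i) / #s) {α δ : ℝ} (hα : 0 ≤ α) (hδ : 0 < δ) :
    exp (δ * x a) * ∑ i ∈ s, exp (α * x i) < ∑ i ∈ s, exp ((α + δ) * x i) := by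
  set q := fun i => exp (α * x i)
  have hT : 0 < ∑ i ∈ s, q i := sum_pos (fun i _ => exp_pos _) hs
  have hcard : (0 : ℝ) < #s := by exact_mod_cast hs.card_pos
  have hmean : (∑ i ∈ s, x i) / #s ≤ (∑ i ∈ s, q i * x i) / ∑ i ∈ s, q i := by
    rw [div_le_div_iff₀ hcard hT, mul_comm (∑ i ∈ s, q i * x i), mul_comm (∑ i ∈ s, x i)]
    exact sum_mul_sum_le_card_mul_sum_exp_mul s x hα
  have hjensen :=
    exp_sum_mul_div_le_sum_mul_exp_div s q (fun i => δ * x i) (fun _ _ => (exp_pos _).le) hT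
  simp only [mul_left_comm _ δ, ← mul_sum, q, ← exp_add, ← add_mul] at hjensen
  rw [← lt_div_iff₀ hT]
  calc exp (δ * x a) < exp (δ * ((∑ i ∈ s, q i * x i) / ∑ i ∈ s, q i)) :=
        exp_lt_exp.2 (mul_lt_mul_of_pos_left (ha.trans_le hmean) hδ)
    _ ≤ _ := by rw [← mul_div_assoc]; exact hjensen

theorem sum_exp_mul_div_sum_exp_mul_strictAntiOn {S A : Finset ι} (hAS : A ⊆ S)
    (hA : A.Nonempty) (x : ι → ℝ) (hx : ∀ a ∈ A, x a < (∑ i ∈ S, x i) / #S) :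
    StrictAntiOn (fun α => (∑ e ∈ A, exp (α * x e)) / ∑ e ∈ S, exp (α * x e)) (Set.Ici 0) := by
  intro α₁ hα₁ α₂ _ hlt
  have hS := hA.mono hAS
  have hpos : ∀ α, 0 < ∑ e ∈ S, exp (α * x e) := fun α => sum_pos (fun _ _ => exp_pos _) hS
  obtain ⟨δ, hδ, rfl⟩ : ∃ δ, 0 < δ ∧ α₂ = α₁ + δ := ⟨α₂ - α₁, sub_pos.2 hlt, by ring⟩
  rw [div_lt_div_iff₀ (hpos _) (hpos _), sum_mul, sum_mul]
  refine sum_lt_sum_of_nonempty hA fun a ha => ?_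
  rw [add_mul, exp_add, mul_assoc]
  exact mul_lt_mul_of_pos_left
    (exp_mul_mul_sum_exp_lt_sum_exp hS x (hx a ha) (Set.mem_Ici.1 hα₁) hδ) (exp_pos _)

end

theorem sampling_mass_strict_anti_general {ι : Type*} (S : Finset ι)
    (w : ι → ℝ) (hw : ∀ e ∈ S, 0 < w e)
    (A : Finset ι) (hAS : A ⊆ S) (hA : A.Nonempty)
    (hmax : A.sup' hA (fun e => Real.log (w e)) <
      (1 / (S.card : ℝ)) * ∑ e ∈ S, Real.log (w e)) :
    ∀ α₁ α₂ : ℝ, 0 ≤ α₁ → α₁ < α₂ →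
      (∑ e ∈ A, w e ^ α₂) / (∑ e ∈ S, w e ^ α₂) <
        (∑ e ∈ A, w e ^ α₁) / (∑ e ∈ S, w e ^ α₁) := by
  intro α₁ α₂ hα₁ hlt
  have hrpow : ∀ α, ∀ T ⊆ S, ∑ e ∈ T, w e ^ α = ∑ e ∈ T, exp (α * log (w e)) :=
    fun α T hT => sum_congr rfl fun e he => by rw [rpow_def_of_pos (hw e (hT he)), mul_comm]
  have hx : ∀ a ∈ A, log (w a) < (∑ e ∈ S, log (w e)) / #S := fun a ha => by
    rw [div_eq_inv_mul, ← one_div]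
    exact (le_sup' (fun e => log (w e)) ha).trans_lt hmax
  simp only [hrpow _ A hAS, hrpow _ S subset_rfl]
  exact sum_exp_mul_div_sum_exp_mul_strictAntiOn hAS hA _ hx hα₁ (hα₁.trans hlt.le) hlt

theorem sampling_mass_strict_anti {ι : Type*} (S : Finset ι) (hS : S.Nonempty)
    (w : ι → ℝ) (hw : ∀ e ∈ S, 0 < w e)
    (A : Finset ι) (hAS : A ⊆ S) (hA : A.Nonempty)
    (hmax : A.sup' hA (fun e => Real.log (w e)) <
      (1 / (S.card : ℝ)) * ∑ e ∈ S, Real.log (w e)) :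
    ∀ α₁ α₂ : ℝ, 0 ≤ α₁ → α₁ < α₂ →
      (∑ e ∈ A, w e ^ α₂) / (∑ e ∈ S, w e ^ α₂) <
        (∑ e ∈ A, w e ^ α₁) / (∑ e ∈ S, w e ^ α₁) :=
  sampling_mass_strict_anti_general S w hw A hAS hA hmax
end

section
/- Let V be a finite type, let E be a finite set of hyperedges (nonempty finite subsets of V), and for v ∈ V let d(v) := |{e ∈ E : v ∈ e}| be the degree of v. Let ω : E → ℝ satisfy ω(e) > 0 for all e ∈ E. For k ∈ ℕ, let V_k := {v ∈ V : d(v) ≤ k} and E(V_k) := {e ∈ E : e ∩ V_k ≠ ∅}, and for α ∈ ℝ define h_α(k) := 1 − (Σ_{e ∈ E(V_k)} ω(e)^α) / (Σ_{e ∈ E} ω(e)^α). Fix k ∈ ℕ such that E(V_k) is nonempty and max_{e ∈ E(V_k)} log ω(e) < (1/|E|) · Σ_{e ∈ E} log ω(e). Then α ↦ h_α(k) is strictly increasing on [0, ∞): for all 0 ≤ α₁ < α₂, h_{α₁}(k) < h_{α₂}(k). -/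
/-!
Put `n = |E|`. For `a ∈ E(V_k)` the hypothesis says `n log ω(a) < Σ_E log ω`, so by AM–GM (in its
tangent-line form `exp x ≥ exp c · (1 + x - c)`) `n ω(a)^δ < Σ_E ω^δ` for every `δ > 0`. As `ω^α` and `ω^δ`
are similarly ordered when `α ≥ 0`, Chebyshev's sum inequality upgrades this to
`(Σ_E ω^α) ω(a)^δ < Σ_E ω^(α+δ)`. Weighting by `ω(a)^α` and summing over `E(V_k)` is the cross-multiplied
form of `l_{α+δ}(k) < l_α(k)`.
-/

open Finset Real

namespace Real

variable {ι : Type*}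

theorem card_mul_exp_lt_sum_exp {s : Finset ι} {x : ι → ℝ} {c : ℝ}
    (h : #s * c < ∑ i ∈ s, x i) : #s * exp c < ∑ i ∈ s, exp (x i) := by
  have tangent : ∀ i ∈ s, exp c * (1 + (x i - c)) ≤ exp (x i) := fun i _ => by
    calc exp c * (1 + (x i - c)) ≤ exp c * exp (x i - c) := by
          gcongr; linarith [add_one_le_exp (x i - c)]
      _ = exp (x i) := by rw [← exp_add]; ring_nf
  calc (#s : ℝ) * exp c < ∑ i ∈ s, exp c * (1 + (x i - c)) := by
        rw [← mul_sum, sum_add_distrib, sum_sub_distrib, sum_const, sum_const, nsmul_eq_mul,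
          nsmul_eq_mul, mul_one, mul_comm]
        nlinarith [exp_pos c]
    _ ≤ ∑ i ∈ s, exp (x i) := sum_le_sum tangent

theorem card_mul_rpow_lt_sum_rpow {s : Finset ι} {f : ι → ℝ} {w δ : ℝ}
    (hf : ∀ i ∈ s, 0 < f i) (hw : 0 < w) (hδ : 0 < δ) (h : #s * log w < ∑ i ∈ s, log (f i)) :
    #s * w ^ δ < ∑ i ∈ s, f i ^ δ := by
  rw [rpow_def_of_pos hw, sum_congr rfl fun i hi => rpow_def_of_pos (hf i hi) δ]
  refine card_mul_exp_lt_sum_exp ?_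
  rw [← sum_mul, ← mul_assoc]
  exact mul_lt_mul_of_pos_right h hδ

theorem monovaryOn_rpow_rpow {s : Set ι} {f : ι → ℝ} {α δ : ℝ}
    (hf : ∀ i ∈ s, 0 < f i) (hα : 0 ≤ α) (hδ : 0 < δ) :
    MonovaryOn (fun i => f i ^ α) (fun i => f i ^ δ) s := fun i hi j hj hij =>
  rpow_le_rpow (hf i hi).le ((rpow_lt_rpow_iff (hf i hi).le (hf j hj).le hδ).mp hij).le hα

theorem sum_rpow_mul_rpow_lt_sum_rpow_add {s : Finset ι} {f : ι → ℝ} {w α δ : ℝ}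
    (hf : ∀ i ∈ s, 0 < f i) (hw : 0 < w) (hα : 0 ≤ α) (hδ : 0 < δ)
    (h : #s * log w < ∑ i ∈ s, log (f i)) :
    (∑ i ∈ s, f i ^ α) * w ^ δ < ∑ i ∈ s, f i ^ (α + δ) := by
  have hs : s.Nonempty := nonempty_iff_ne_empty.mpr fun hs => by simp [hs] at h
  have hcard : (0 : ℝ) < #s := by exact_mod_cast hs.card_pos
  have hsum : 0 < ∑ i ∈ s, f i ^ α := sum_pos (fun i hi => rpow_pos_of_pos (hf i hi) α) hs
  have chebyshev := (monovaryOn_rpow_rpow (s := (s : Set ι)) hf hα hδ).sum_mul_sum_le_card_mul_sum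
  rw [sum_congr rfl fun i hi => rpow_add (hf i hi) α δ]
  refine lt_of_mul_lt_mul_left ?_ hcard.le
  calc (#s : ℝ) * ((∑ i ∈ s, f i ^ α) * w ^ δ)
      = (∑ i ∈ s, f i ^ α) * (#s * w ^ δ) := by ring
    _ < (∑ i ∈ s, f i ^ α) * ∑ i ∈ s, f i ^ δ :=
        mul_lt_mul_of_pos_left (card_mul_rpow_lt_sum_rpow hf hw hδ h) hsum
    _ ≤ #s * ∑ i ∈ s, f i ^ α * f i ^ δ := chebyshev

theorem sum_rpow_div_sum_rpow_lt {s t : Finset ι} {f : ι → ℝ} {α β : ℝ}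
    (hs : s.Nonempty) (hst : s ⊆ t) (hf : ∀ i ∈ t, 0 < f i)
    (h : ∀ i ∈ s, #t * log (f i) < ∑ j ∈ t, log (f j)) (hα : 0 ≤ α) (hαβ : α < β) :
    (∑ i ∈ s, f i ^ β) / ∑ i ∈ t, f i ^ β < (∑ i ∈ s, f i ^ α) / ∑ i ∈ t, f i ^ α := by
  have hpos : ∀ γ : ℝ, 0 < ∑ i ∈ t, f i ^ γ := fun γ =>
    sum_pos (fun i hi => rpow_pos_of_pos (hf i hi) γ) (hs.mono hst)
  obtain ⟨δ, hδ, rfl⟩ : ∃ δ, 0 < δ ∧ β = α + δ := ⟨β - α, sub_pos.mpr hαβ, by ring⟩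
  rw [div_lt_div_iff₀ (hpos _) (hpos _), mul_comm, mul_sum, sum_mul]
  refine sum_lt_sum_of_nonempty hs fun i hi => ?_
  have hfi := hf i (hst hi)
  calc (∑ j ∈ t, f j ^ α) * f i ^ (α + δ) = f i ^ α * ((∑ j ∈ t, f j ^ α) * f i ^ δ) := by
        rw [rpow_add hfi]; ring
    _ < f i ^ α * ∑ j ∈ t, f j ^ (α + δ) := mul_lt_mul_of_pos_left
        (sum_rpow_mul_rpow_lt_sum_rpow_add hf hfi hα hδ (h i hi)) (rpow_pos_of_pos hfi α)

end Real

theorem h_strictly_increasing_in_alpha_general {V : Type*} [Fintype V] [DecidableEq V]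
    (E : Finset (Finset V))
    (d : V → ℕ)
    (ω : Finset V → ℝ) (hω : ∀ e ∈ E, 0 < ω e)
    (k : ℕ)
    (hEVk : (E.filter (fun e => (e ∩ Finset.univ.filter (fun v => d v ≤ k)).Nonempty)).Nonempty)
    (hmax : (E.filter (fun e => (e ∩ Finset.univ.filter (fun v => d v ≤ k)).Nonempty)).sup' hEVk
        (fun e => Real.log (ω e)) <
      (1 / (E.card : ℝ)) * ∑ e ∈ E, Real.log (ω e)) :
    ∀ α₁ α₂ : ℝ, 0 ≤ α₁ → α₁ < α₂ →
      (1 - (∑ e ∈ E.filter (fun e => (e ∩ Finset.univ.filter (fun v => d v ≤ k)).Nonempty),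
              ω e ^ α₁) / (∑ e ∈ E, ω e ^ α₁)) <
        (1 - (∑ e ∈ E.filter (fun e => (e ∩ Finset.univ.filter (fun v => d v ≤ k)).Nonempty),
              ω e ^ α₂) / (∑ e ∈ E, ω e ^ α₂)) := by
  intro α₁ α₂ hα₁ hlt
  have hcard : (0 : ℝ) < #E := by exact_mod_cast (hEVk.mono (filter_subset _ _)).card_pos
  rw [one_div, inv_mul_eq_div, lt_div_iff₀ hcard] at hmax
  have hlog : ∀ e ∈ E.filter (fun e => (e ∩ univ.filter (fun v => d v ≤ k)).Nonempty),
      #E * log (ω e) < ∑ e ∈ E, log (ω e) := fun e he => by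
    nlinarith [le_sup' (fun e => log (ω e)) he]
  linarith [sum_rpow_div_sum_rpow_lt hEVk (filter_subset _ _) hω hlog hα₁ hlt]

theorem h_strictly_increasing_in_alpha {V : Type*} [Fintype V] [DecidableEq V]
    (E : Finset (Finset V)) (hedges : ∀ e ∈ E, e.Nonempty)
    (d : V → ℕ) (hd : ∀ v : V, d v = (E.filter (fun e => v ∈ e)).card)
    (ω : Finset V → ℝ) (hω : ∀ e ∈ E, 0 < ω e)
    (k : ℕ)
    (hEVk : (E.filter (fun e => (e ∩ Finset.univ.filter (fun v => d v ≤ k)).Nonempty)).Nonempty)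
    (hmax : (E.filter (fun e => (e ∩ Finset.univ.filter (fun v => d v ≤ k)).Nonempty)).sup' hEVk
        (fun e => Real.log (ω e)) <
      (1 / (E.card : ℝ)) * ∑ e ∈ E, Real.log (ω e)) :
    ∀ α₁ α₂ : ℝ, 0 ≤ α₁ → α₁ < α₂ →
      (1 - (∑ e ∈ E.filter (fun e => (e ∩ Finset.univ.filter (fun v => d v ≤ k)).Nonempty),
              ω e ^ α₁) / (∑ e ∈ E, ω e ^ α₁)) <
        (1 - (∑ e ∈ E.filter (fun e => (e ∩ Finset.univ.filter (fun v => d v ≤ k)).Nonempty),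
              ω e ^ α₂) / (∑ e ∈ E, ω e ^ α₂)) :=
  h_strictly_increasing_in_alpha_general E d ω hω k hEVk hmax
end

section
/- Let V be a finite type, let E be a nonempty finite set of hyperedges (nonempty finite subsets of V), and for v ∈ V let d(v) := |{e ∈ E : v ∈ e}| be the degree of v. Define the MiDaS weight ω(e) := min_{v ∈ e} d(v) (as a real number) for each e ∈ E; note ω(e) ≥ 1 since every node of a hyperedge has degree at least 1. For k ∈ ℕ, let V_k := {v ∈ V : d(v) ≤ k}, E(V_k) := {e ∈ E : e ∩ V_k ≠ ∅}, and for α ∈ ℝ define h_α(k) := 1 − (Σ_{e ∈ E(V_k)} ω(e)^α) / (Σ_{e ∈ E} ω(e)^α). If k ∈ ℕ is such that E(V_k) is nonempty and max_{e ∈ E(V_k)} log ω(e) < (1/|E|) · Σ_{e ∈ E} log ω(e), then for all 0 ≤ α₁ < α₂ one has h_{α₁}(k) < h_{α₂}(k); that is, as α increases, MiDaS-Basic becomes more biased towards hyperedges whose nodes all have degree greater than k. -/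
/-!
Write `c` for the mean of `log ω` over `E` and `δ = α₂ - α₁ > 0`, so that `exp (δ c)` is the
`δ`-th power of the geometric mean of the weights. Passing from `α₁` to `α₂` multiplies each
term `ω(e)^α₁` by `ω(e)^δ`. On `E(V_k)` this factor is `< exp (δ c)` by hypothesis. On all of `E`
the total grows at least by `exp (δ c)`: by Chebyshev's sum inequality (`ω^α₁` and `ω^δ` are
similarly ordered since `α₁ ≥ 0`) and AM-GM, `∑ ω^α₁ ω^δ ≥ (∑ ω^α₁) · mean(ω^δ) ≥
(∑ ω^α₁) · exp (δ c)`. Hence the share `l_α(k)` of `E(V_k)` strictly decreases.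
-/

open Finset Real

section PowerSums

variable {ι : Type*} {s t : Finset ι} {w : ι → ℝ}

lemma card_mul_exp_mean_le_sum_exp (hs : s.Nonempty) (f : ι → ℝ) :
    #s * exp ((#s : ℝ)⁻¹ * ∑ i ∈ s, f i) ≤ ∑ i ∈ s, exp (f i) := by
  have hcard : (0 : ℝ) < #s := by exact_mod_cast hs.card_pos
  have jensen := convexOn_exp.map_sum_le (t := s) (w := fun _ => (#s : ℝ)⁻¹) (p := f)
    (fun _ _ => by positivity) (by simp [hcard.ne']) (fun _ _ => Set.mem_univ _)
  simp only [smul_eq_mul, ← mul_sum] at jensen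
  calc (#s : ℝ) * exp ((#s : ℝ)⁻¹ * ∑ i ∈ s, f i)
      ≤ #s * ((#s : ℝ)⁻¹ * ∑ i ∈ s, exp (f i)) := by gcongr
    _ = ∑ i ∈ s, exp (f i) := by field_simp

lemma monovaryOn_rpow_rpow (hw : ∀ i ∈ s, 0 ≤ w i) {α β : ℝ} (hα : 0 ≤ α) (hβ : 0 ≤ β) :
    MonovaryOn (fun i => w i ^ α) (fun i => w i ^ β) s := by
  intro i hi j hj hij
  have hwij : w i ≤ w j := by
    by_contra! h
    exact not_lt_of_ge (rpow_le_rpow (hw j hj) h.le hβ) hij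
  exact rpow_le_rpow (hw i hi) hwij hα

lemma exp_mul_mean_log_mul_sum_rpow_le (hs : s.Nonempty) (hw : ∀ i ∈ s, 0 < w i) {α β : ℝ}
    (hα : 0 ≤ α) (hβ : 0 ≤ β) :
    exp (β * ((#s : ℝ)⁻¹ * ∑ i ∈ s, log (w i))) * ∑ i ∈ s, w i ^ α ≤
      ∑ i ∈ s, w i ^ (α + β) := by
  have hcard : (0 : ℝ) < #s := by exact_mod_cast hs.card_pos
  have amgm : #s * exp (β * ((#s : ℝ)⁻¹ * ∑ i ∈ s, log (w i))) ≤ ∑ i ∈ s, w i ^ β := by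
    calc (#s : ℝ) * exp (β * ((#s : ℝ)⁻¹ * ∑ i ∈ s, log (w i)))
        = #s * exp ((#s : ℝ)⁻¹ * ∑ i ∈ s, β * log (w i)) := by rw [← mul_sum, mul_left_comm]
      _ ≤ ∑ i ∈ s, exp (β * log (w i)) := card_mul_exp_mean_le_sum_exp hs _
      _ = ∑ i ∈ s, w i ^ β :=
        sum_congr rfl fun i hi => by rw [rpow_def_of_pos (hw i hi), mul_comm]
  have chebyshev :=
    (monovaryOn_rpow_rpow (fun i hi => (hw i hi).le) hα hβ).sum_mul_sum_le_card_mul_sum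
  rw [sum_congr rfl fun i hi => rpow_add (hw i hi) α β]
  refine le_of_mul_le_mul_left ?_ hcard
  calc (#s : ℝ) * (exp (β * ((#s : ℝ)⁻¹ * ∑ i ∈ s, log (w i))) * ∑ i ∈ s, w i ^ α)
      = (∑ i ∈ s, w i ^ α) * (#s * exp (β * ((#s : ℝ)⁻¹ * ∑ i ∈ s, log (w i)))) := by ring
    _ ≤ (∑ i ∈ s, w i ^ α) * ∑ i ∈ s, w i ^ β := by
      gcongr
      exact sum_nonneg fun i hi => (rpow_pos_of_pos (hw i hi) α).le
    _ ≤ #s * ∑ i ∈ s, w i ^ α * w i ^ β := chebyshev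

lemma sum_rpow_add_lt_exp_mul_sum_rpow (ht : t.Nonempty) (hw : ∀ i ∈ t, 0 < w i) {c : ℝ}
    (hlog : ∀ i ∈ t, log (w i) < c) (α : ℝ) {β : ℝ} (hβ : 0 < β) :
    ∑ i ∈ t, w i ^ (α + β) < exp (β * c) * ∑ i ∈ t, w i ^ α := by
  rw [mul_sum]
  refine sum_lt_sum_of_nonempty ht fun i hi => ?_
  calc w i ^ (α + β) = w i ^ α * exp (β * log (w i)) := by
        rw [rpow_add (hw i hi), rpow_def_of_pos (hw i hi) β, mul_comm (log _)]
    _ < w i ^ α * exp (β * c) := by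
        gcongr
        · exact rpow_pos_of_pos (hw i hi) α
        · exact hlog i hi
    _ = exp (β * c) * w i ^ α := mul_comm _ _

theorem sum_rpow_div_sum_rpow_lt_of_log_lt_mean (hts : t ⊆ s) (ht : t.Nonempty)
    (hw : ∀ i ∈ s, 0 < w i) (hlog : ∀ i ∈ t, log (w i) < (#s : ℝ)⁻¹ * ∑ i ∈ s, log (w i))
    {α β : ℝ} (hα : 0 ≤ α) (hαβ : α < β) :
    (∑ i ∈ t, w i ^ β) / ∑ i ∈ s, w i ^ β < (∑ i ∈ t, w i ^ α) / ∑ i ∈ s, w i ^ α := by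
  obtain ⟨δ, hδ, rfl⟩ : ∃ δ, 0 < δ ∧ β = α + δ := ⟨β - α, sub_pos.mpr hαβ, by ring⟩
  have hs := ht.mono hts
  have hsum_pos : ∀ u ⊆ s, u.Nonempty → ∀ γ : ℝ, 0 < ∑ i ∈ u, w i ^ γ := fun u hu hne γ =>
    sum_pos (fun i hi => rpow_pos_of_pos (hw i (hu hi)) γ) hne
  rw [div_lt_div_iff₀ (hsum_pos s subset_rfl hs _) (hsum_pos s subset_rfl hs _)]
  set g := exp (δ * ((#s : ℝ)⁻¹ * ∑ i ∈ s, log (w i)))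
  calc (∑ i ∈ t, w i ^ (α + δ)) * ∑ i ∈ s, w i ^ α
      < (g * ∑ i ∈ t, w i ^ α) * ∑ i ∈ s, w i ^ α := by
        gcongr
        · exact hsum_pos s subset_rfl hs α
        · exact sum_rpow_add_lt_exp_mul_sum_rpow ht (fun i hi => hw i (hts hi)) hlog α hδ
    _ = (∑ i ∈ t, w i ^ α) * (g * ∑ i ∈ s, w i ^ α) := by ring
    _ ≤ (∑ i ∈ t, w i ^ α) * ∑ i ∈ s, w i ^ (α + δ) := by
        gcongr
        · exact (hsum_pos t hts ht α).le
        · exact exp_mul_mean_log_mul_sum_rpow_le hs hw hα hδ.le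

end PowerSums

theorem midas_basic_h_strictly_increasing_general {V : Type*} [Fintype V] [DecidableEq V]
    (E : Finset (Finset V)) (hedges : ∀ e ∈ E, e.Nonempty)
    (d : V → ℕ) (hd : ∀ v : V, d v = (E.filter (fun e => v ∈ e)).card)
    (ω : Finset V → ℝ)
    (hω : ∀ e ∈ E, ∀ he : e.Nonempty, ω e = ((e.inf' he d : ℕ) : ℝ))
    (k : ℕ)
    (hEVk : (E.filter (fun e => (e ∩ Finset.univ.filter (fun v => d v ≤ k)).Nonempty)).Nonempty)
    (hmax : (E.filter (fun e => (e ∩ Finset.univ.filter (fun v => d v ≤ k)).Nonempty)).sup' hEVk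
        (fun e => Real.log (ω e)) <
      (1 / (E.card : ℝ)) * ∑ e ∈ E, Real.log (ω e)) :
    ∀ α₁ α₂ : ℝ, 0 ≤ α₁ → α₁ < α₂ →
      (1 - (∑ e ∈ E.filter (fun e => (e ∩ Finset.univ.filter (fun v => d v ≤ k)).Nonempty),
              ω e ^ α₁) / (∑ e ∈ E, ω e ^ α₁)) <
        (1 - (∑ e ∈ E.filter (fun e => (e ∩ Finset.univ.filter (fun v => d v ≤ k)).Nonempty),
              ω e ^ α₂) / (∑ e ∈ E, ω e ^ α₂)) := by
  intro α₁ α₂ hα₁ hα₁₂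
  have hω_pos : ∀ e ∈ E, 0 < ω e := fun e he => by
    rw [hω e he (hedges e he), Nat.cast_pos, lt_inf'_iff]
    exact fun v hv => hd v ▸ card_pos.mpr ⟨e, mem_filter.mpr ⟨he, hv⟩⟩
  have hlog : ∀ e ∈ E.filter (fun e => (e ∩ univ.filter (fun v => d v ≤ k)).Nonempty),
      log (ω e) < (#E : ℝ)⁻¹ * ∑ e ∈ E, log (ω e) := fun e he =>
    inv_eq_one_div (#E : ℝ) ▸ (le_sup' (fun e => log (ω e)) he).trans_lt hmax
  exact sub_lt_sub_left
    (sum_rpow_div_sum_rpow_lt_of_log_lt_mean (filter_subset _ E) hEVk hω_pos hlog hα₁ hα₁₂) 1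

theorem midas_basic_h_strictly_increasing {V : Type*} [Fintype V] [DecidableEq V]
    (E : Finset (Finset V)) (hE : E.Nonempty) (hedges : ∀ e ∈ E, e.Nonempty)
    (d : V → ℕ) (hd : ∀ v : V, d v = (E.filter (fun e => v ∈ e)).card)
    (ω : Finset V → ℝ)
    (hω : ∀ e ∈ E, ∀ he : e.Nonempty, ω e = ((e.inf' he d : ℕ) : ℝ))
    (k : ℕ)
    (hEVk : (E.filter (fun e => (e ∩ Finset.univ.filter (fun v => d v ≤ k)).Nonempty)).Nonempty)
    (hmax : (E.filter (fun e => (e ∩ Finset.univ.filter (fun v => d v ≤ k)).Nonempty)).sup' hEVk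
        (fun e => Real.log (ω e)) <
      (1 / (E.card : ℝ)) * ∑ e ∈ E, Real.log (ω e)) :
    ∀ α₁ α₂ : ℝ, 0 ≤ α₁ → α₁ < α₂ →
      (1 - (∑ e ∈ E.filter (fun e => (e ∩ Finset.univ.filter (fun v => d v ≤ k)).Nonempty),
              ω e ^ α₁) / (∑ e ∈ E, ω e ^ α₁)) <
        (1 - (∑ e ∈ E.filter (fun e => (e ∩ Finset.univ.filter (fun v => d v ≤ k)).Nonempty),
              ω e ^ α₂) / (∑ e ∈ E, ω e ^ α₂)) :=
  midas_basic_h_strictly_increasing_general E hedges d hd ω hω k hEVk hmax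
end
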